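/- arXiv:1809.07542 — 2 statements merged into one kernel-verified Lean document; each statement's English description precedes it below -/
import Mathlib

section
/- Let 𝔄 be a Boolean algebra with two operators ◇₀, ◇₁ validating the GLB axioms (□ₙ(□ₙx→x) ≤ □ₙx for n=0,1; □₀x ≤ □₁x; ◇₀x ≤ □₁◇₀x, for all x). If ◇₁ is completely additive, then □₁⊥ = ⊤. (Algebraic core of the 𝒱-incompleteness of GLB.) -/
/-- The dual box of an operator `f` on a Boolean algebra. -/
def mbox {α : Type*} [BooleanAlgebra α] (f : α → α) (x : α) : α := (f xᶜ)ᶜ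

/-!
For each `y`, the element `y ⊓ (◇₀ y)ᶜ` is annihilated by `◇₁`: it lies hle_dia `y`, and
`◇₁ ≤ ◇₀` puts its image hle_dia `◇₀ y`, while `◇₀ y ≤ □₁ ◇₀ y` puts its image hle_dia
`(◇₀ y)ᶜ`. Löb's axiom for `◇₀` says that no nonzero `x` satisfies `x ≤ ◇₀ x`, so these
elements have join `⊤`. Complete additivity of `◇₁` then gives `◇₁ ⊤ = ⊥`, i.e. `□₁ ⊥ = ⊤`.
-/

theorem Monotone.of_isLUB_image {α β : Type*} [Preorder α] [Preorder β] {f : α → β}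
    (hf : ∀ (X : Set α) (s : α), IsLUB X s → IsLUB (f '' X) (f s)) : Monotone f := by
  intro x y hxy
  have hlub : IsLUB {x, y} y :=
    IsGreatest.isLUB ⟨Set.mem_insert_of_mem x rfl, by simp [upperBounds, hxy]⟩
  exact (hf _ _ hlub).1 (Set.mem_image_of_mem f (Set.mem_insert x _))

section BooleanAlgebra

variable {α : Type*} [BooleanAlgebra α]

theorem mbox_le_mbox_iff {f g : α → α} {x : α} : mbox f x ≤ mbox g x ↔ g xᶜ ≤ f xᶜ :=
  compl_le_compl_iff_le

theorem le_mbox_iff {f : α → α} {x y : α} : x ≤ mbox f y ↔ f yᶜ ≤ xᶜ :=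
  le_compl_comm

theorem eq_bot_of_le_map_of_lob {f : α → α}
    (hlob : ∀ x : α, mbox f ((mbox f x)ᶜ ⊔ x) ≤ mbox f x) (hbot : f ⊥ = ⊥)
    {x : α} (hx : x ≤ f x) : x = ⊥ := by
  have hlob' : f x ≤ f (x ⊓ (f x)ᶜ) := by
    simpa [mbox, inf_comm] using hlob xᶜ
  have hirr : x ⊓ (f x)ᶜ = ⊥ := (disjoint_compl_right_iff.mpr hx).eq_bot
  rw [hirr, hbot] at hlob'
  exact le_bot_iff.mp (hx.trans hlob')

theorem isLUB_range_inf_compl_map_of_lob {f : α → α}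
    (hlob : ∀ x : α, mbox f ((mbox f x)ᶜ ⊔ x) ≤ mbox f x) (hbot : f ⊥ = ⊥) :
    IsLUB (Set.range fun y => y ⊓ (f y)ᶜ) ⊤ := by
  refine ⟨fun _ _ => le_top, fun b hb => ?_⟩
  have hle : bᶜ ⊓ (f bᶜ)ᶜ ≤ b := hb (Set.mem_range_self bᶜ)
  have hirr : bᶜ ⊓ (f bᶜ)ᶜ = ⊥ :=
    le_bot_iff.mp (by simpa using le_inf hle (inf_le_left : bᶜ ⊓ (f bᶜ)ᶜ ≤ bᶜ))
  have hb' : bᶜ = ⊥ :=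
    eq_bot_of_le_map_of_lob hlob hbot (disjoint_compl_right_iff.mp (disjoint_iff.mpr hirr))
  exact (compl_eq_bot.mp hb').ge

end BooleanAlgebra

theorem stmt_15_general {α : Type*} [BooleanAlgebra α] (f0 f1 : α → α)
    (h0bot : f0 ⊥ = ⊥)
    (hlob0 : ∀ x : α, mbox f0 ((mbox f0 x)ᶜ ⊔ x) ≤ mbox f0 x)
    (h01 : ∀ x : α, mbox f0 x ≤ mbox f1 x)
    (hiii : ∀ x : α, f0 x ≤ mbox f1 (f0 x))
    (hV : ∀ (X : Set α) (s : α), IsLUB X s → IsLUB (f1 '' X) (f1 s)) :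
    mbox f1 ⊥ = ⊤ := by
  have mono1 : Monotone f1 := Monotone.of_isLUB_image hV
  have h10 (x : α) : f1 x ≤ f0 x := by simpa using mbox_le_mbox_iff.mp (h01 xᶜ)
  have hkill (y : α) : f1 (y ⊓ (f0 y)ᶜ) = ⊥ := by
    have hle_dia : f1 (y ⊓ (f0 y)ᶜ) ≤ f0 y := (mono1 inf_le_left).trans (h10 y)
    have hle_compl : f1 (y ⊓ (f0 y)ᶜ) ≤ (f0 y)ᶜ :=
      (mono1 inf_le_right).trans (le_mbox_iff.mp (hiii y))
    exact le_bot_iff.mp (by simpa using le_inf hle_dia hle_compl)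
  have htop : f1 ⊤ ≤ ⊥ := by
    refine (hV _ _ (isLUB_range_inf_compl_map_of_lob hlob0 h0bot)).2 ?_
    rintro _ ⟨_, ⟨y, rfl⟩, rfl⟩
    exact (hkill y).le
  simp [mbox, le_bot_iff.mp htop]

/-- Algebraic core of the 𝒱-incompleteness of GLB: in any BAO validating the
GLB axioms in which `◇₁` is completely additive, `□₁⊥ = ⊤`. -/
theorem stmt_15 {α : Type*} [BooleanAlgebra α] (f0 f1 : α → α)
    (h0join : ∀ x y : α, f0 (x ⊔ y) = f0 x ⊔ f0 y) (h0bot : f0 ⊥ = ⊥)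
    (h1join : ∀ x y : α, f1 (x ⊔ y) = f1 x ⊔ f1 y) (h1bot : f1 ⊥ = ⊥)
    (hlob0 : ∀ x : α, mbox f0 ((mbox f0 x)ᶜ ⊔ x) ≤ mbox f0 x)
    (hlob1 : ∀ x : α, mbox f1 ((mbox f1 x)ᶜ ⊔ x) ≤ mbox f1 x)
    (h01 : ∀ x : α, mbox f0 x ≤ mbox f1 x)
    (hiii : ∀ x : α, f0 x ≤ mbox f1 (f0 x))
    (hV : ∀ (X : Set α) (s : α), IsLUB X s → IsLUB (f1 '' X) (f1 s)) :
    mbox f1 ⊥ = ⊤ :=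
  stmt_15_general f0 f1 h0bot hlob0 h01 hiii hV
end

section
/- If a normal modal logic L is sound and complete with respect to a class of completely additive modal algebras (𝒱-BAOs) and contains the van Benthem axiom □◇⊤ → □(□(□p → p) → p), then L contains □◇⊤ → □⊥. Consequently, any normal modal logic containing the van Benthem axiom but not containing □◇⊤ → □⊥ is 𝒱-incomplete. -/
/-- Modal formulas. -/
inductive MF : Type
  | var : ℕ → MF
  | bot : MF
  | imp : MF → MF → MF
  | box : MF → MF

/-- A (bundled) modal algebra: a Boolean algebra with an operator. -/
structure MA where
  carrier : Type
  [ba : BooleanAlgebra carrier]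
  dia : carrier → carrier
  dia_join : ∀ x y : carrier, dia (x ⊔ y) = dia x ⊔ dia y
  dia_bot : dia ⊥ = ⊥

attribute [instance] MA.ba

/-- Evaluation of a modal formula in a modal algebra under a valuation. -/
def MA.eval (A : MA) (θ : ℕ → A.carrier) : MF → A.carrier
  | MF.var n => θ n
  | MF.bot => ⊥
  | MF.imp φ ψ => (A.eval θ φ)ᶜ ⊔ A.eval θ ψ
  | MF.box φ => (A.dia ((A.eval θ φ)ᶜ))ᶜ

/-- Validity of a formula over a modal algebra. -/
def MA.valid (A : MA) (φ : MF) : Prop := ∀ θ : ℕ → A.carrier, A.eval θ φ = ⊤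

/-- Complete additivity of the operator of a modal algebra. -/
def MA.CompletelyAdditive (A : MA) : Prop :=
  ∀ (X : Set A.carrier) (s : A.carrier), IsLUB X s → IsLUB (A.dia '' X) (A.dia s)

def MF.neg (φ : MF) : MF := MF.imp φ MF.bot
def MF.top : MF := MF.neg MF.bot
def MF.dia (φ : MF) : MF := MF.neg (MF.box (MF.neg φ))

/-- The van Benthem axiom `□◇⊤ → □(□(□p → p) → p)`. -/
def vBAxiom : MF :=
  MF.imp (MF.box (MF.dia MF.top))
    (MF.box (MF.imp (MF.box (MF.imp (MF.box (MF.var 0)) (MF.var 0))) (MF.var 0)))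

/-- The formula `□◇⊤ → □⊥`. -/
def vBConseq : MF := MF.imp (MF.box (MF.dia MF.top)) (MF.box MF.bot)


/-!
In a completely additive algebra validating the van Benthem axiom, let `W` be the set of `x`
with `◇x ≤ ◇□⊥`. The instances of the axiom put every `□(□p → p) ∧ ¬p` into `W`, and a
Löb-style argument shows that the only upper bound of these elements is `⊤`. So `⊤` is the
join of `W`, and complete additivity gives `◇⊤ ≤ ◇□⊥`, which is `□◇⊤ ≤ □⊥`.
-/

theorem eq_top_of_forall_box_box_himp_sdiff_le {α : Type*} [BooleanAlgebra α] {box : α → α}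
    (box_top : box ⊤ = ⊤) {y : α} (hy : ∀ p, box (box p ⇨ p) \ p ≤ y) : y = ⊤ := by
  have hLoeb : box (box y ⇨ y) ≤ y := by simpa [sdiff_le_iff] using hy y
  set u := box y ⇨ y
  have hu : u = ⊤ := by
    have hbox_u : box u ≤ u := hLoeb.trans le_himp
    have h := hy u
    rw [himp_eq_top_iff.mpr hbox_u, box_top, top_sdiff, compl_himp, sdiff_le_iff, sup_idem] at h
    exact himp_eq_top_iff.mpr h
  rw [← top_le_iff, ← box_top, ← hu]
  exact hLoeb

namespace MA

variable (A : MA)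

def box (a : A.carrier) : A.carrier := (A.dia aᶜ)ᶜ

theorem box_top : A.box ⊤ = ⊤ := by
  simp [box, A.dia_bot]

theorem box_bot : A.box ⊥ = (A.dia ⊤)ᶜ := by
  simp [box]

theorem box_le_box_iff {a b : A.carrier} : A.box a ≤ A.box b ↔ A.dia bᶜ ≤ A.dia aᶜ :=
  compl_le_compl_iff_le

variable {A}

@[simp]
theorem eval_imp (θ : ℕ → A.carrier) (φ ψ : MF) :
    A.eval θ (MF.imp φ ψ) = A.eval θ φ ⇨ A.eval θ ψ := by
  rw [himp_eq, sup_comm, eval]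

@[simp]
theorem eval_var (θ : ℕ → A.carrier) (n : ℕ) : A.eval θ (MF.var n) = θ n :=
  rfl

@[simp]
theorem eval_bot (θ : ℕ → A.carrier) : A.eval θ MF.bot = ⊥ :=
  rfl

@[simp]
theorem eval_box (θ : ℕ → A.carrier) (φ : MF) : A.eval θ (MF.box φ) = A.box (A.eval θ φ) :=
  rfl

@[simp]
theorem eval_dia (θ : ℕ → A.carrier) (φ : MF) : A.eval θ φ.dia = A.dia (A.eval θ φ) := by
  simp [MF.dia, MF.neg, eval]

@[simp]
theorem eval_top (θ : ℕ → A.carrier) : A.eval θ MF.top = ⊤ := by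
  simp [MF.top, MF.neg, eval]

theorem valid_imp_iff {φ ψ : MF} : A.valid (MF.imp φ ψ) ↔ ∀ θ, A.eval θ φ ≤ A.eval θ ψ := by
  simp [valid, himp_eq_top_iff]

theorem dia_le_dia_box_bot_of_valid_vBAxiom (hax : A.valid vBAxiom) (p : A.carrier) :
    A.dia (A.box (A.box p ⇨ p) \ p) ≤ A.dia (A.box ⊥) := by
  have h := valid_imp_iff.mp hax fun _ => p
  simp only [eval_box, eval_dia, eval_top, eval_imp, eval_var, box_le_box_iff, compl_himp] at h
  rwa [box_bot]

theorem dia_top_le_dia_box_bot (hCA : A.CompletelyAdditive) (hax : A.valid vBAxiom) :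
    A.dia ⊤ ≤ A.dia (A.box ⊥) := by
  have hW : IsLUB {x | A.dia x ≤ A.dia (A.box ⊥)} ⊤ :=
    ⟨fun _ _ => le_top, fun _ hy => (eq_top_of_forall_box_box_himp_sdiff_le A.box_top
      fun p => hy (dia_le_dia_box_bot_of_valid_vBAxiom hax p)).ge⟩
  refine (hCA _ ⊤ hW).2 ?_
  rintro _ ⟨x, hx, rfl⟩
  exact hx

theorem valid_vBConseq (hCA : A.CompletelyAdditive) (hax : A.valid vBAxiom) :
    A.valid vBConseq := by
  refine valid_imp_iff.mpr fun θ => ?_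
  simp only [eval_box, eval_dia, eval_top, eval_bot, box_le_box_iff, compl_bot]
  rw [← box_bot]
  exact dia_top_le_dia_box_bot hCA hax

end MA

/-- If a logic `L` is sound and complete with respect to a class `K` of
completely additive modal algebras and contains the van Benthem axiom,
then it contains `□◇⊤ → □⊥`. -/
theorem stmt_19 (L : Set MF) (K : Set MA)
    (hCA : ∀ A ∈ K, A.CompletelyAdditive)
    (hSC : ∀ φ : MF, φ ∈ L ↔ ∀ A ∈ K, A.valid φ)
    (hvB : vBAxiom ∈ L) :
    vBConseq ∈ L := by
  rw [hSC] at hvB ⊢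
  exact fun A hA => A.valid_vBConseq (hCA A hA) (hvB A hA)
end
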